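/- arXiv:1711.10917 — 2 statements merged into one kernel-verified Lean document; each statement's English description precedes it below -/
import Mathlib

section
/- Let 0 < α < π and let φ be the cardinal trigonometric GB-splines with phase α. Define, for p ≥ 2, f_p^{T_α}(θ) := −φ̈ p ((p+1)/2) − 2·Σ_{k=1}^{⌊p/2⌋} φ̈ p ((p+1)/2 − k)·cos(kθ), where φ̈ p is the second derivative of t ↦ φ p t. Then for every integer p ≥ 4 and every θ ∈ [−π, π]: f_p^{T_α}(θ) ≤ 2 − 2·cos θ. -/
open Real MeasureTheory

noncomputable def fSym (φ : ℕ → ℝ → ℝ) (p : ℕ) (θ : ℝ) : ℝ :=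
  -(deriv (deriv (φ p)) (((p : ℝ) + 1) / 2)) -
    2 * ∑ k ∈ Finset.Icc 1 (p / 2),
      deriv (deriv (φ p)) (((p : ℝ) + 1) / 2 - (k : ℝ)) * Real.cos ((k : ℝ) * θ)

/-!
The recursion says that `φ (q + 1)` is `φ q` convolved with the indicator of `[0, 1]`
(`boxConv`). Hence every `φ q` is a continuous probability density on `[0, q + 1]`, symmetric
about its centre, and `φ p''` is the second difference of `φ (p - 2)`. Summing by parts,
`fSym φ p θ = (2 - 2 cos θ) S(θ)` with `S(θ) = ∑ⱼ φ (p - 2) ((p - 1) / 2 - j) cos (j θ)`.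
The coefficients of `S` are nonnegative, so `S(θ) ≤ S(0)`, and `S(0) = 1` because the integer
translates of a box-convolved density add up to its total mass.
-/

structure IsUnitBump (f : ℝ → ℝ) (L : ℝ) : Prop where
  continuous : Continuous f
  nonneg : ∀ t, 0 ≤ f t
  eq_zero_of_nonpos : ∀ t ≤ 0, f t = 0
  symm : ∀ t, f (L - t) = f t
  integral_eq_one : ∫ t in (0)..L, f t = 1

noncomputable def boxConv (f : ℝ → ℝ) (t : ℝ) : ℝ :=
  ∫ s in (t - 1)..t, f s

section BoxConv

variable {f : ℝ → ℝ} {L : ℝ}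

theorem intervalIntegral_eq_zero_of_eqOn {a b : ℝ} (h : ∀ t ∈ Set.uIcc a b, f t = 0) :
    ∫ t in a..b, f t = 0 := by
  rw [intervalIntegral.integral_congr h, intervalIntegral.integral_zero]

theorem integral_sub_comp_sub_one (hf : Continuous f) (a b : ℝ) :
    ∫ s in a..b, (f s - f (s - 1)) = (∫ s in (b - 1)..b, f s) - ∫ s in (a - 1)..a, f s := by
  have hf' : Continuous fun s => f (s - 1) := hf.comp (continuous_sub_right 1)
  rw [intervalIntegral.integral_sub (hf.intervalIntegrable _ _) (hf'.intervalIntegrable _ _),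
    intervalIntegral.integral_comp_sub_right f 1,
    intervalIntegral.integral_interval_sub_interval_comm (hf.intervalIntegrable _ _)
      (hf.intervalIntegrable _ _) (hf.intervalIntegrable _ _),
    intervalIntegral.integral_symm a, intervalIntegral.integral_symm b]
  ring

theorem integral_sub_comp_sub_one_eq_boxConv (hf : Continuous f) (hz : ∀ t ≤ 0, f t = 0)
    (t : ℝ) : ∫ s in (0)..t, (f s - f (s - 1)) = boxConv f t := by
  rw [integral_sub_comp_sub_one hf, boxConv,
    intervalIntegral_eq_zero_of_eqOn (a := 0 - 1) fun s hs => hz s ?_, sub_zero]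
  rw [Set.uIcc_of_le (by norm_num)] at hs
  exact hs.2

theorem boxConv_eq_sub_primitive (hf : Continuous f) (t : ℝ) :
    boxConv f t = (∫ s in (0)..t, f s) - ∫ s in (0)..(t - 1), f s :=
  (intervalIntegral.integral_interval_sub_left (hf.intervalIntegrable _ _)
    (hf.intervalIntegrable _ _)).symm

namespace IsUnitBump

theorem eq_zero_of_ge (hf : IsUnitBump f L) {t : ℝ} (ht : L ≤ t) : f t = 0 := by
  rw [← hf.symm]
  exact hf.eq_zero_of_nonpos _ (by linarith)

theorem integral_eq_one_of_le (hf : IsUnitBump f L) {a b : ℝ} (ha : a ≤ 0) (hb : L ≤ b) :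
    ∫ t in a..b, f t = 1 := by
  have hi := fun c d => hf.continuous.intervalIntegrable (μ := volume) c d
  rw [← intervalIntegral.integral_add_adjacent_intervals (hi a 0) (hi 0 b),
    ← intervalIntegral.integral_add_adjacent_intervals (hi 0 L) (hi L b), hf.integral_eq_one,
    intervalIntegral_eq_zero_of_eqOn fun t ht => hf.eq_zero_of_nonpos t ?_,
    intervalIntegral_eq_zero_of_eqOn fun t ht => hf.eq_zero_of_ge ?_]
  · ring
  · exact (Set.uIcc_of_le hb ▸ ht).1
  · exact (Set.uIcc_of_le ha ▸ ht).2

theorem symm_boxConv (hf : IsUnitBump f L) (t : ℝ) :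
    boxConv f (L + 1 - t) = boxConv f t := by
  rw [boxConv, show L + 1 - t - 1 = L - t by ring, show L + 1 - t = L - (t - 1) by ring,
    ← intervalIntegral.integral_comp_sub_left]
  simp_rw [hf.symm]
  rfl

theorem integral_boxConv (hf : IsUnitBump f L) : ∫ t in (0)..(L + 1), boxConv f t = 1 := by
  have hF := intervalIntegral.continuous_primitive
    (fun a b => hf.continuous.intervalIntegrable (μ := volume) a b) 0
  simp_rw [boxConv_eq_sub_primitive hf.continuous]
  rw [integral_sub_comp_sub_one hF, add_sub_cancel_right,
    intervalIntegral_eq_zero_of_eqOn (a := 0 - 1) (b := 0) fun t ht => ?_,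
    intervalIntegral.integral_congr (g := fun _ => 1) fun t ht =>
      hf.integral_eq_one_of_le le_rfl ?_]
  · simp
  · exact (Set.uIcc_of_le (show L ≤ L + 1 by linarith) ▸ ht).1
  · rw [Set.uIcc_of_le (by norm_num)] at ht
    exact intervalIntegral_eq_zero_of_eqOn fun s hs =>
      hf.eq_zero_of_nonpos s (Set.uIcc_of_ge ht.2 ▸ hs).2

theorem sum_boxConv_eq_one (hf : IsUnitBump f L) {y : ℝ} {N : ℕ} (hy : y ≤ 1)
    (hN : L + 1 ≤ y + N) : ∑ i ∈ Finset.range N, boxConv f (y + i) = 1 := by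
  calc ∑ i ∈ Finset.range N, boxConv f (y + i)
      = ∑ i ∈ Finset.range N, ∫ s in (y - 1 + i)..(y - 1 + (i + 1 : ℕ)), f s := by
        refine Finset.sum_congr rfl fun i _ => ?_
        rw [boxConv]
        congr 1 <;> push_cast <;> ring
    _ = ∫ s in (y - 1 + (0 : ℕ))..(y - 1 + N), f s :=
        intervalIntegral.sum_integral_adjacent_intervals fun _ _ =>
          hf.continuous.intervalIntegrable _ _
    _ = 1 := hf.integral_eq_one_of_le (by push_cast; linarith) (by linarith)

end IsUnitBump

theorem isUnitBump_boxConv (hf : IsUnitBump f L) : IsUnitBump (boxConv f) (L + 1) where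
  continuous := by
    have hF := intervalIntegral.continuous_primitive
      (fun a b => hf.continuous.intervalIntegrable (μ := volume) a b) 0
    simp_rw [funext (boxConv_eq_sub_primitive hf.continuous)]
    exact hF.sub (hF.comp (continuous_sub_right 1))
  nonneg t := intervalIntegral.integral_nonneg (by linarith) fun s _ => hf.nonneg s
  eq_zero_of_nonpos t ht := intervalIntegral_eq_zero_of_eqOn fun s hs =>
    hf.eq_zero_of_nonpos s ((Set.uIcc_of_le (show t - 1 ≤ t by linarith) ▸ hs).2.trans ht)
  symm := hf.symm_boxConv
  integral_eq_one := hf.integral_boxConv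

end BoxConv

section Recursion

variable {f g h : ℝ → ℝ}

theorem hasDerivAt_of_eq_integral_sub_comp_sub_one (hf : Continuous f)
    (hg : ∀ t, g t = ∫ s in (0)..t, (f s - f (s - 1))) (t : ℝ) :
    HasDerivAt g (f t - f (t - 1)) t := by
  rw [funext hg]
  exact ((hf.sub (hf.comp (continuous_sub_right 1))).integral_hasStrictDerivAt 0 t).hasDerivAt

theorem deriv_deriv_eq_second_diff (hf : Continuous f)
    (hg : ∀ t, g t = ∫ s in (0)..t, (f s - f (s - 1)))
    (hh : ∀ t, h t = ∫ s in (0)..t, (g s - g (s - 1))) (t : ℝ) :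
    deriv (deriv h) t = f t - 2 * f (t - 1) + f (t - 2) := by
  have hg' := hasDerivAt_of_eq_integral_sub_comp_sub_one hf hg
  have hgc : Continuous g := continuous_iff_continuousAt.2 fun t => (hg' t).continuousAt
  rw [funext fun t => (hasDerivAt_of_eq_integral_sub_comp_sub_one hgc hh t).deriv]
  refine ((hg' t).sub ((hg' (t - 1)).comp_sub_const t 1)).deriv.trans ?_
  rw [sub_sub t 1 1, one_add_one_eq_two]
  ring

theorem isUnitBump_of_eq_integral_sub_comp_sub_one {φ : ℕ → ℝ → ℝ}
    (hrec : ∀ q, 1 ≤ q → ∀ t, φ (q + 1) t = ∫ s in (0)..t, (φ q s - φ q (s - 1)))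
    (h1 : IsUnitBump (φ 1) 2) : ∀ q, 1 ≤ q → IsUnitBump (φ q) (q + 1) := by
  intro q hq
  induction q, hq using Nat.le_induction with
  | base => convert h1; norm_num
  | succ q hq ih =>
    rw [funext fun t => (hrec q hq t).trans
      (integral_sub_comp_sub_one_eq_boxConv ih.continuous ih.eq_zero_of_nonpos t), Nat.cast_succ]
    exact isUnitBump_boxConv ih

end Recursion

noncomputable def trigHat (α t : ℝ) : ℝ :=
  α / (2 * (1 - cos α)) * sin (α * max 0 (1 - |t - 1|))

theorem ite_eq_trigHat (α t : ℝ) :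
    (if 0 ≤ t ∧ t < 1 then α / (2 * (1 - Real.cos α)) * Real.sin (α * t)
      else if 1 ≤ t ∧ t < 2 then α / (2 * (1 - Real.cos α)) * Real.sin (α * (2 - t))
      else 0) = trigHat α t := by
  rw [trigHat]
  split_ifs with h₀ h₁
  · rw [abs_of_nonpos (by linarith), max_eq_right (by linarith)]
    ring_nf
  · rw [abs_of_nonneg (by linarith), max_eq_right (by linarith)]
    ring_nf
  · have : 1 ≤ |t - 1| := by
      rw [le_abs]
      by_contra! h
      rcases lt_or_ge t 1 with ht | ht
      · exact h₀ ⟨by linarith, ht⟩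
      · exact h₁ ⟨ht, by linarith⟩
    rw [max_eq_left (by linarith), mul_zero, sin_zero, mul_zero]

theorem trigHat_two_sub (α t : ℝ) : trigHat α (2 - t) = trigHat α t := by
  rw [trigHat, trigHat, show 2 - t - 1 = -(t - 1) by ring, abs_neg]

theorem continuous_trigHat (α : ℝ) : Continuous (trigHat α) := by
  unfold trigHat
  fun_prop

theorem integral_trigHat {α : ℝ} (hα : 0 < α) (hαπ : α < π) :
    ∫ t in (0)..2, trigHat α t = 1 := by
  have hi := fun a b => (continuous_trigHat α).intervalIntegrable (μ := volume) a b
  have hcos : cos α < 1 := cos_zero ▸ cos_lt_cos_of_nonneg_of_le_pi le_rfl hαπ.le hα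
  have hhalf : ∫ t in (1)..2, trigHat α t = ∫ t in (0)..1, trigHat α t := by
    have := intervalIntegral.integral_comp_sub_left (trigHat α) 2 (a := 0) (b := 1)
    simp only [trigHat_two_sub] at this
    norm_num at this
    exact this.symm
  have hleft : ∫ t in (0)..1, trigHat α t =
      α / (2 * (1 - cos α)) * ∫ t in (0)..1, sin (α * t) := by
    rw [← intervalIntegral.integral_const_mul]
    refine intervalIntegral.integral_congr fun t ht => ?_
    rw [Set.uIcc_of_le zero_le_one] at ht
    rw [trigHat, abs_of_nonpos (by linarith [ht.2]), max_eq_right (by linarith [ht.1])]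
    ring_nf
  rw [← intervalIntegral.integral_add_adjacent_intervals (hi 0 1) (hi 1 2), hhalf, hleft,
    intervalIntegral.integral_comp_mul_left (fun x => sin x) hα.ne', integral_sin]
  have : 1 - cos α ≠ 0 := by linarith
  simp only [mul_zero, mul_one, cos_zero, smul_eq_mul]
  field_simp
  ring

theorem isUnitBump_trigHat {α : ℝ} (hα : 0 < α) (hαπ : α < π) :
    IsUnitBump (trigHat α) 2 where
  continuous := continuous_trigHat α
  nonneg t := by
    have hcos : cos α < 1 := cos_zero ▸ cos_lt_cos_of_nonneg_of_le_pi le_rfl hαπ.le hα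
    refine mul_nonneg (div_nonneg hα.le (by linarith)) (sin_nonneg_of_nonneg_of_le_pi ?_ ?_)
    · positivity
    · calc α * max 0 (1 - |t - 1|) ≤ α * 1 := by gcongr; exact max_le zero_le_one (by simp)
        _ ≤ π := by linarith
  eq_zero_of_nonpos t ht := by
    rw [trigHat, abs_of_nonpos (by linarith), max_eq_left (by linarith), mul_zero, sin_zero,
      mul_zero]
  symm := trigHat_two_sub α
  integral_eq_one := integral_trigHat hα hαπ

theorem sum_Icc_add_sub_eq_sum_range (g : ℝ → ℝ) (x : ℝ) (K : ℕ) :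
    g x + ∑ k ∈ Finset.Icc 1 K, (g (x - k) + g (x + k)) =
      ∑ i ∈ Finset.range (2 * K + 1), g (x - K + i) := by
  induction K with
  | zero => simp
  | succ K ih =>
    rw [Finset.sum_Icc_succ_top (by omega), ← add_assoc, ih,
      show 2 * (K + 1) + 1 = 2 * K + 1 + 1 + 1 by ring, Finset.sum_range_succ _ (2 * K + 1 + 1),
      Finset.sum_range_succ' _ (2 * K + 1)]
    push_cast
    simp_rw [show ∀ i : ℝ, x - (K + 1) + (i + 1) = x - K + i by intro i; ring]
    rw [show x - K + (2 * K + 1) = x + (K + 1) by ring, add_zero]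
    ring

theorem sum_second_diff_mul_cos (b : ℤ → ℝ) (θ : ℝ) (K : ℕ) :
    (b (-1) - 2 * b 0 + b 1) + 2 * ∑ k ∈ Finset.Icc 1 K,
        (b (k - 1) - 2 * b k + b (k + 1)) * cos (k * θ) =
      (2 * cos θ - 2) * (b 0 + 2 * ∑ k ∈ Finset.Icc 1 K, b k * cos (k * θ)) +
        2 * b (K + 1) * cos (K * θ) - 2 * b K * cos ((K + 1) * θ) + (b (-1) - b 1) := by
  induction K with
  | zero => norm_num; ring
  | succ K ih =>
    rw [Finset.sum_Icc_succ_top (by omega), Finset.sum_Icc_succ_top (by omega)]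
    have hcos : cos ((K + 1 + 1) * θ) = 2 * cos ((K + 1) * θ) * cos θ - cos (K * θ) := by
      rw [show ((K : ℝ) + 1 + 1) * θ = (K + 1) * θ + θ by ring,
        show (K : ℝ) * θ = (K + 1) * θ - θ by ring, cos_add, cos_sub]
      ring
    push_cast
    rw [add_sub_cancel_right]
    linear_combination ih + 2 * b (K + 1) * hcos

theorem fSym_eq_mul {φ : ℕ → ℝ → ℝ} {g : ℝ → ℝ} {q : ℕ}
    (hdd : ∀ x, deriv (deriv (φ (q + 2))) x = g x - 2 * g (x - 1) + g (x - 2))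
    (hg : IsUnitBump g (q + 1)) (θ : ℝ) :
    fSym φ (q + 2) θ = (2 - 2 * cos θ) * (g ((q + 1) / 2) +
      2 * ∑ k ∈ Finset.Icc 1 ((q + 2) / 2), g ((q + 1) / 2 - k) * cos (k * θ)) := by
  set K := (q + 2) / 2
  set b : ℤ → ℝ := fun j => g ((q + 1) / 2 - j)
  have hK : (q : ℝ) + 1 ≤ 2 * K := by exact_mod_cast (by omega : q + 1 ≤ 2 * K)
  have hd2 : ∀ k : ℤ, deriv (deriv (φ (q + 2))) ((((q + 2 : ℕ) : ℝ) + 1) / 2 - k) =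
      b (k - 1) - 2 * b k + b (k + 1) := by
    intro k
    simp only [hdd, b]
    push_cast
    ring_nf
  have hbK : b K = 0 := hg.eq_zero_of_nonpos _ (by push_cast; linarith)
  have hbK1 : b (K + 1) = 0 := hg.eq_zero_of_nonpos _ (by push_cast; linarith)
  have hb1 : b (-1) = b 1 := by
    simp only [b, ← hg.symm ((q + 1) / 2 - ((-1 : ℤ) : ℝ))]
    push_cast
    ring_nf
  have hsum := sum_second_diff_mul_cos b θ K
  have hb0 : b 0 = g ((q + 1) / 2) := by simp [b]
  rw [hbK, hbK1, hb1, hb0] at hsum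
  have hS : ∑ k ∈ Finset.Icc 1 K, g ((q + 1) / 2 - k) * cos (k * θ) =
      ∑ k ∈ Finset.Icc 1 K, b k * cos (k * θ) := by simp [b]
  have hT : ∑ k ∈ Finset.Icc 1 K,
      deriv (deriv (φ (q + 2))) ((((q + 2 : ℕ) : ℝ) + 1) / 2 - k) * cos (k * θ) =
      ∑ k ∈ Finset.Icc 1 K, (b (k - 1) - 2 * b k + b (k + 1)) * cos (k * θ) := by
    simp_rw [← hd2, Int.cast_natCast]
  have h0 := hd2 0
  rw [Int.cast_zero, sub_zero, zero_sub, zero_add, hb1, hb0] at h0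
  rw [fSym, hS, hT, h0]
  linear_combination -hsum

theorem IsUnitBump.cos_sum_boxConv_le_one {f : ℝ → ℝ} {L : ℝ} (hf : IsUnitBump f L)
    {K : ℕ} (hK : L ≤ 2 * K + 1) (θ : ℝ) :
    boxConv f ((L + 1) / 2) +
      2 * ∑ k ∈ Finset.Icc 1 K, boxConv f ((L + 1) / 2 - k) * cos (k * θ) ≤ 1 := by
  set m := (L + 1) / 2 with hm
  have hg := isUnitBump_boxConv hf
  calc _ ≤ boxConv f m + 2 * ∑ k ∈ Finset.Icc 1 K, boxConv f (m - k) := by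
        gcongr with k
        exact mul_le_of_le_one_right (hg.nonneg _) (cos_le_one _)
    _ = boxConv f m + ∑ k ∈ Finset.Icc 1 K, (boxConv f (m - k) + boxConv f (m + k)) := by
        rw [Finset.sum_add_distrib, two_mul]
        congr 2
        refine Finset.sum_congr rfl fun k _ => ?_
        rw [← hg.symm, hm]
        ring_nf
    _ = ∑ i ∈ Finset.range (2 * K + 1), boxConv f (m - K + i) :=
        sum_Icc_add_sub_eq_sum_range _ _ _
    _ = 1 := hf.sum_boxConv_eq_one (by linarith) (by push_cast; linarith)

theorem fSym_trig_upper_general (α : ℝ) (hα : 0 < α) (hαπ : α < Real.pi) (φ : ℕ → ℝ → ℝ)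
    (hφ1 : ∀ t : ℝ, φ 1 t =
      if 0 ≤ t ∧ t < 1 then α / (2 * (1 - Real.cos α)) * Real.sin (α * t)
      else if 1 ≤ t ∧ t < 2 then α / (2 * (1 - Real.cos α)) * Real.sin (α * (2 - t))
      else 0)
    (hrec : ∀ q : ℕ, 2 ≤ q → ∀ t : ℝ,
      φ q t = ∫ s in (0:ℝ)..t, (φ (q - 1) s - φ (q - 1) (s - 1)))
    (p : ℕ) (hp : 4 ≤ p)
    (θ : ℝ) :
    fSym φ p θ ≤ 2 - 2 * Real.cos θ := by
  have hstep : ∀ q, 1 ≤ q → ∀ t, φ (q + 1) t = ∫ s in (0)..t, (φ q s - φ q (s - 1)) :=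
    fun q hq t => by simpa using hrec (q + 1) (by omega) t
  have hbump := isUnitBump_of_eq_integral_sub_comp_sub_one hstep
    (funext (fun t => (hφ1 t).trans (ite_eq_trigHat α t)) ▸ isUnitBump_trigHat hα hαπ)
  obtain ⟨r, rfl⟩ : ∃ r, p = r + 1 + 2 := ⟨p - 3, by omega⟩
  have hr : 1 ≤ r := by omega
  have hbox : φ (r + 1) = boxConv (φ r) := funext fun t => (hstep r hr t).trans
    (integral_sub_comp_sub_one_eq_boxConv (hbump r hr).continuous (hbump r hr).eq_zero_of_nonpos t)
  have hdd := deriv_deriv_eq_second_diff (hbump (r + 1) (by omega)).continuous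
    (hstep (r + 1) (by omega)) (hstep (r + 1 + 1) (by omega))
  rw [fSym_eq_mul hdd (hbump (r + 1) (by omega)), hbox]
  have hle := (hbump r hr).cos_sum_boxConv_le_one (K := (r + 1 + 2) / 2)
    (by exact_mod_cast (by omega : r + 1 ≤ 2 * ((r + 1 + 2) / 2) + 1)) θ
  rw [show ((r : ℝ) + 1 + 1) / 2 = (((r + 1 : ℕ) : ℝ) + 1) / 2 by push_cast; ring] at hle
  exact mul_le_of_le_one_right (by linarith [cos_le_one θ]) hle

theorem fSym_trig_upper (α : ℝ) (hα : 0 < α) (hαπ : α < Real.pi) (φ : ℕ → ℝ → ℝ)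
    (hφ1 : ∀ t : ℝ, φ 1 t =
      if 0 ≤ t ∧ t < 1 then α / (2 * (1 - Real.cos α)) * Real.sin (α * t)
      else if 1 ≤ t ∧ t < 2 then α / (2 * (1 - Real.cos α)) * Real.sin (α * (2 - t))
      else 0)
    (hrec : ∀ q : ℕ, 2 ≤ q → ∀ t : ℝ,
      φ q t = ∫ s in (0:ℝ)..t, (φ (q - 1) s - φ (q - 1) (s - 1)))
    (p : ℕ) (hp : 4 ≤ p)
    (θ : ℝ) (hθ : θ ∈ Set.Icc (-Real.pi) Real.pi) :
    fSym φ p θ ≤ 2 - 2 * Real.cos θ :=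
  fSym_trig_upper_general α hα hαπ φ hφ1 hrec p hp θ
end

section
/- Fix α > 0 and an integer p ≥ 2. For a phase parameter 0 < μ < π let φ^{(μ)} be the cardinal trigonometric GB-splines with phase μ, and let φ be the polynomial cardinal B-splines; define f_p^{T_μ}(θ) := −(φ^{(μ)})̈ p ((p+1)/2) − 2·Σ_{k=1}^{⌊p/2⌋} (φ^{(μ)})̈ p ((p+1)/2 − k)·cos(kθ) and f_p(θ) := −φ̈ p ((p+1)/2) − 2·Σ_{k=1}^{⌊p/2⌋} φ̈ p ((p+1)/2 − k)·cos(kθ), where ·̈ denotes the second derivative in the argument t. Then there exist a constant C > 0 and an integer N (with N large enough that α/n < π for n ≥ N) such that for all n ≥ N: ∫_{−π}^{π} |f_p^{T_{α/n}}(θ) − f_p(θ)| dθ ≤ C · n^{−2}. -/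
/-!
Both spline families are generated from their first members by the same linear integral
recursion, so the difference of the `p`-th members is bounded on `(-∞, p]` by a constant times
the sup-distance of the first members. The trigonometric hat is the arc
`u ↦ μ sin (μ u) / (2 (1 - cos μ))` composed with the polynomial tent, and that arc has slope
within `μ²` of `1` on `[0, 1]`, so the distance is `O(μ²)`. For `p ≥ 3` the second derivatives
are second backward differences of the members of order `p - 2`; for `p = 2` they are read off
the slopes of the hats. Hence every coefficient of `f_p^{T_μ} - f_p` is `O(μ²)`, and `μ = α / n`.
-/

open Real MeasureTheory

open Set

noncomputable def tent (t : ℝ) : ℝ := max (1 - |t - 1|) 0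

lemma continuous_tent : Continuous tent :=
  (continuous_const.sub (continuous_sub_right 1).abs).max continuous_const

lemma tent_of_nonpos {t : ℝ} (ht : t ≤ 0) : tent t = 0 := by
  rw [tent, abs_of_nonpos (by linarith)]
  exact max_eq_right (by linarith)

lemma tent_of_mem_Icc_zero_one {t : ℝ} (ht : t ∈ Icc 0 1) : tent t = t := by
  rw [tent, abs_of_nonpos (by linarith [ht.2]), max_eq_left (by linarith [ht.1])]
  ring

lemma tent_of_mem_Icc_one_two {t : ℝ} (ht : t ∈ Icc 1 2) : tent t = 2 - t := by
  rw [tent, abs_of_nonneg (by linarith [ht.1]), max_eq_left (by linarith [ht.2])]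
  ring

lemma tent_mem_Icc (t : ℝ) : tent t ∈ Icc 0 1 :=
  ⟨le_max_right _ _, max_le (by linarith [abs_nonneg (t - 1)]) zero_le_one⟩

lemma ite_eq_comp_tent {g : ℝ → ℝ} (hg : g 0 = 0) (t : ℝ) :
    (if 0 ≤ t ∧ t < 1 then g t else if 1 ≤ t ∧ t < 2 then g (2 - t) else 0) = g (tent t) := by
  split_ifs with h01 h12
  · rw [tent_of_mem_Icc_zero_one ⟨h01.1, h01.2.le⟩]
  · rw [tent_of_mem_Icc_one_two ⟨h12.1, h12.2.le⟩]
  · rw [tent, max_eq_right, hg]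
    rcases le_or_gt 0 t with h0 | h0
    · have h1 : 1 ≤ t := le_of_not_gt fun h => h01 ⟨h0, h⟩
      have h2 : 2 ≤ t := le_of_not_gt fun h => h12 ⟨h1, h⟩
      rw [abs_of_nonneg (by linarith)]
      linarith
    · rw [abs_of_nonpos (by linarith)]
      linarith

lemma hasDerivAt_tent_of_mem_Ioo_zero_one {t : ℝ} (ht : t ∈ Ioo 0 1) : HasDerivAt tent 1 t :=
  (hasDerivAt_id t).congr_of_eventuallyEq <| by
    filter_upwards [Ioo_mem_nhds ht.1 ht.2] with s hs
    exact tent_of_mem_Icc_zero_one (Ioo_subset_Icc_self hs)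

lemma hasDerivAt_tent_of_mem_Ioo_one_two {t : ℝ} (ht : t ∈ Ioo 1 2) :
    HasDerivAt tent (-1) t :=
  ((hasDerivAt_id t).const_sub 2).congr_of_eventuallyEq <| by
    filter_upwards [Ioo_mem_nhds ht.1 ht.2] with s hs
    exact tent_of_mem_Icc_one_two (Ioo_subset_Icc_self hs)

lemma hasDerivAt_tent_of_neg {t : ℝ} (ht : t < 0) : HasDerivAt tent 0 t :=
  (hasDerivAt_const t 0).congr_of_eventuallyEq <| by
    filter_upwards [Iio_mem_nhds ht] with s hs
    exact tent_of_nonpos (le_of_lt hs)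

lemma sq_div_two_mul_one_sub_cos_mem_Icc {μ : ℝ} (hμ0 : 0 < μ) (hμ1 : μ ≤ 1) :
    μ ^ 2 / (2 * (1 - cos μ)) ∈ Icc 1 (1 + μ ^ 2) := by
  have hcos_ge : 1 - μ ^ 2 / 2 ≤ cos μ := one_sub_sq_div_two_le_cos
  have hcos_le : cos μ ≤ 1 - μ ^ 2 / 2 + μ ^ 4 * (5 / 96) := by
    have h := Real.cos_bound (x := μ) (by rwa [abs_of_pos hμ0])
    rw [abs_of_pos hμ0] at h
    linarith [(abs_le.1 h).2]
  have hμ2 : 0 < μ ^ 2 := by positivity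
  have hμ4 : μ ^ 4 ≤ μ ^ 2 := pow_le_pow_of_le_one hμ0.le hμ1 (by norm_num)
  have hd : 0 < 2 * (1 - cos μ) := by nlinarith
  constructor
  · rw [le_div_iff₀ hd]
    linarith
  · rw [div_le_iff₀ hd]
    nlinarith [mul_le_mul_of_nonneg_left hμ4 hμ2.le]

lemma abs_sq_div_two_mul_one_sub_cos_mul_cos_sub_one_le {μ u : ℝ} (hμ0 : 0 < μ) (hμ1 : μ ≤ 1)
    (hu : u ∈ Icc 0 1) : |μ ^ 2 / (2 * (1 - cos μ)) * cos (μ * u) - 1| ≤ μ ^ 2 := by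
  obtain ⟨hc1, hc2⟩ := sq_div_two_mul_one_sub_cos_mem_Icc hμ0 hμ1
  have hμu : (μ * u) ^ 2 ≤ μ ^ 2 := by
    have : μ * u ≤ μ := mul_le_of_le_one_right hμ0.le hu.2
    gcongr
    exact mul_nonneg hμ0.le hu.1
  have hcos_ge : 1 - μ ^ 2 / 2 ≤ cos (μ * u) :=
    le_trans (by linarith) (one_sub_sq_div_two_le_cos (x := μ * u))
  have hcos_le : cos (μ * u) ≤ 1 := cos_le_one _
  have hμ2 : μ ^ 2 ≤ 1 := pow_le_one₀ hμ0.le hμ1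
  rw [abs_le]
  constructor <;> nlinarith

noncomputable def trigArc (μ u : ℝ) : ℝ := μ / (2 * (1 - cos μ)) * sin (μ * u)

lemma trigArc_zero (μ : ℝ) : trigArc μ 0 = 0 := by
  simp [trigArc]

lemma hasDerivAt_trigArc (μ u : ℝ) :
    HasDerivAt (trigArc μ) (μ ^ 2 / (2 * (1 - cos μ)) * cos (μ * u)) u := by
  refine ((((hasDerivAt_id u).const_mul μ).sin).const_mul (μ / (2 * (1 - cos μ)))).congr_deriv ?_
  simp only [id]
  ring

lemma differentiable_trigArc (μ : ℝ) : Differentiable ℝ (trigArc μ) :=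
  fun u => (hasDerivAt_trigArc μ u).differentiableAt

lemma abs_trigArc_sub_le {μ u : ℝ} (hμ0 : 0 < μ) (hμ1 : μ ≤ 1) (hu : u ∈ Icc 0 1) :
    |trigArc μ u - u| ≤ μ ^ 2 := by
  have hmvt := norm_image_sub_le_of_norm_deriv_le_segment' (f := fun v => trigArc μ v - v)
    (fun v _ => ((hasDerivAt_trigArc μ v).sub (hasDerivAt_id v)).hasDerivWithinAt)
    (fun v hv => abs_sq_div_two_mul_one_sub_cos_mul_cos_sub_one_le hμ0 hμ1
      (Ico_subset_Icc_self hv)) u hu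
  simp only [trigArc_zero, sub_zero, Real.norm_eq_abs] at hmvt
  exact hmvt.trans (mul_le_of_le_one_right (sq_nonneg μ) hu.2)

def SplineRecursion (F : ℕ → ℝ → ℝ) : Prop :=
  ∀ q : ℕ, 2 ≤ q → ∀ t : ℝ, F q t = ∫ s in (0 : ℝ)..t, (F (q - 1) s - F (q - 1) (s - 1))

lemma Continuous.sub_shift {f : ℝ → ℝ} (hf : Continuous f) : Continuous fun s => f s - f (s - 1) :=
  hf.sub (hf.comp (continuous_sub_right 1))

namespace SplineRecursion

variable {F G : ℕ → ℝ → ℝ}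

lemma succ_eq (hF : SplineRecursion F) {q : ℕ} (hq : 1 ≤ q) :
    F (q + 1) = fun t => ∫ s in (0 : ℝ)..t, (F q s - F q (s - 1)) :=
  funext fun t => by simpa using hF (q + 1) (by omega) t

lemma continuous_apply (hF : SplineRecursion F) (h1 : Continuous (F 1)) {q : ℕ} (hq : 1 ≤ q) :
    Continuous (F q) := by
  induction q, hq using Nat.le_induction with
  | base => exact h1
  | succ q hq ih =>
    rw [hF.succ_eq hq]
    exact intervalIntegral.continuous_primitive
      (fun a b => ih.sub_shift.intervalIntegrable a b) 0

lemma hasDerivAt_apply (hF : SplineRecursion F) (h1 : Continuous (F 1)) {q : ℕ} (hq : 1 ≤ q)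
    (t : ℝ) : HasDerivAt (F (q + 1)) (F q t - F q (t - 1)) t := by
  have hc := hF.continuous_apply h1 hq
  rw [hF.succ_eq hq]
  exact (hc.sub_shift.integral_hasStrictDerivAt 0 t).hasDerivAt

lemma deriv_deriv_apply (hF : SplineRecursion F) (h1 : Continuous (F 1)) {q : ℕ} (hq : 1 ≤ q)
    (t : ℝ) : deriv (deriv (F (q + 2))) t = F q t - 2 * F q (t - 1) + F q (t - 2) := by
  have hd : deriv (F (q + 2)) = fun x => F (q + 1) x - F (q + 1) (x - 1) :=
    funext fun x => (hF.hasDerivAt_apply h1 (by omega) x).deriv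
  rw [hd]
  refine ((hF.hasDerivAt_apply h1 hq t).sub
    ((hF.hasDerivAt_apply h1 hq (t - 1)).comp_sub_const t 1)).deriv.trans ?_
  rw [show t - 1 - 1 = t - 2 by ring]
  ring

lemma deriv_deriv_two (hF : SplineRecursion F) (h1 : Continuous (F 1)) {t a b : ℝ}
    (ha : HasDerivAt (F 1) a t) (hb : HasDerivAt (F 1) b (t - 1)) :
    deriv (deriv (F 2)) t = a - b := by
  have hd : deriv (F 2) = fun x => F 1 x - F 1 (x - 1) :=
    funext fun x => (hF.hasDerivAt_apply h1 le_rfl x).deriv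
  rw [hd]
  exact (ha.sub (hb.comp_sub_const t 1)).deriv

lemma apply_eq_zero (hF : SplineRecursion F) (h1 : ∀ t ≤ 0, F 1 t = 0) {q : ℕ} (hq : 1 ≤ q) :
    ∀ t ≤ 0, F q t = 0 := by
  induction q, hq using Nat.le_induction with
  | base => exact h1
  | succ q hq ih =>
    intro t ht
    rw [hF.succ_eq hq]
    refine (intervalIntegral.integral_congr (g := fun _ => 0) fun s hs => ?_).trans
      intervalIntegral.integral_zero
    rw [uIcc_of_ge ht] at hs
    simp [ih s hs.2, ih (s - 1) (by linarith [hs.2])]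

lemma sub (hF : SplineRecursion F) (hG : SplineRecursion G) (hF1 : Continuous (F 1))
    (hG1 : Continuous (G 1)) : SplineRecursion (F - G) := by
  intro q hq t
  obtain ⟨q, rfl⟩ : ∃ r, q = r + 1 := ⟨q - 1, by omega⟩
  have hq : 1 ≤ q := by omega
  have hFc := hF.continuous_apply hF1 hq
  have hGc := hG.continuous_apply hG1 hq
  simp only [Pi.sub_apply, Nat.add_sub_cancel, hF.succ_eq hq, hG.succ_eq hq]
  rw [← intervalIntegral.integral_sub (hFc.sub_shift.intervalIntegrable 0 t)
    (hGc.sub_shift.intervalIntegrable 0 t)]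
  congr 1
  funext s
  ring

/-- Each step integrates two shifted copies of the previous member over `[0, t] ⊆ [0, M]`,
whence the factor `2 M` per step. -/
lemma abs_apply_le (hF : SplineRecursion F) (h0 : ∀ t ≤ 0, F 1 t = 0) {ε M : ℝ}
    (h1 : ∀ t, |F 1 t| ≤ ε) (hM : 1 ≤ M) {q : ℕ} (hq : 1 ≤ q) :
    ∀ t ≤ M, |F q t| ≤ (2 * M) ^ (q - 1) * ε := by
  have hε : 0 ≤ ε := (abs_nonneg _).trans (h1 0)
  induction q, hq using Nat.le_induction with
  | base => simpa using fun t _ => h1 t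
  | succ q hq ih =>
    intro t ht
    rcases le_or_gt t 0 with ht0 | ht0
    · rw [hF.apply_eq_zero h0 (by omega) t ht0, abs_zero]
      positivity
    have hbound : ∀ s ∈ uIoc (0 : ℝ) t, ‖F q s - F q (s - 1)‖ ≤ 2 * ((2 * M) ^ (q - 1) * ε) := by
      intro s hs
      rw [uIoc_of_le ht0.le] at hs
      rw [Real.norm_eq_abs, two_mul]
      exact (abs_sub _ _).trans (add_le_add (ih s (by linarith [hs.2]))
        (ih (s - 1) (by linarith [hs.2])))
    have hint := intervalIntegral.norm_integral_le_of_norm_le_const hbound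
    rw [Real.norm_eq_abs, sub_zero, abs_of_pos ht0] at hint
    rw [hF.succ_eq hq]
    calc _ ≤ 2 * ((2 * M) ^ (q - 1) * ε) * t := hint
      _ ≤ 2 * ((2 * M) ^ (q - 1) * ε) * M := by gcongr
      _ = (2 * M) ^ (q + 1 - 1) * ε := by
        rw [Nat.add_sub_cancel, ← Nat.sub_add_cancel hq, pow_succ, Nat.add_sub_cancel]
        ring

lemma abs_deriv_deriv_sub_le (hF : SplineRecursion F) (hG : SplineRecursion G)
    (hF1 : Continuous (F 1)) (hG1 : Continuous (G 1)) (h0 : ∀ t ≤ 0, F 1 t = G 1 t) {ε M : ℝ}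
    (hε : ∀ t, |F 1 t - G 1 t| ≤ ε) (hM : 1 ≤ M) {q : ℕ} (hq : 1 ≤ q) {t : ℝ} (ht : t ≤ M) :
    |deriv (deriv (F (q + 2))) t - deriv (deriv (G (q + 2))) t| ≤ 4 * ((2 * M) ^ (q - 1) * ε) := by
  have hD := (hF.sub hG hF1 hG1).abs_apply_le (fun t ht => sub_eq_zero.2 (h0 t ht)) hε hM hq
  have e0 := abs_le.1 (hD t ht)
  have e1 := abs_le.1 (hD (t - 1) (by linarith))
  have e2 := abs_le.1 (hD (t - 2) (by linarith))
  simp only [Pi.sub_apply] at e0 e1 e2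
  rw [hF.deriv_deriv_apply hF1 hq, hG.deriv_deriv_apply hG1 hq, abs_le]
  constructor <;> linarith

lemma deriv_deriv_two_of_eq_comp_tent (hF : SplineRecursion F) {g : ℝ → ℝ}
    (hg : Differentiable ℝ g) (hF1 : F 1 = g ∘ tent) :
    deriv (deriv (F 2)) (1 / 2) = deriv g (1 / 2) ∧
      deriv (deriv (F 2)) (3 / 2) = -2 * deriv g (1 / 2) := by
  have hc : Continuous (F 1) := hF1 ▸ hg.continuous.comp continuous_tent
  have rise : ∀ t ∈ Ioo (0 : ℝ) 1, HasDerivAt (F 1) (deriv g t) t := fun t ht => by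
    simpa [hF1, tent_of_mem_Icc_zero_one (Ioo_subset_Icc_self ht)] using
      (hg (tent t)).hasDerivAt.comp t (hasDerivAt_tent_of_mem_Ioo_zero_one ht)
  have fall : ∀ t ∈ Ioo (1 : ℝ) 2, HasDerivAt (F 1) (-deriv g (2 - t)) t := fun t ht => by
    simpa [hF1, tent_of_mem_Icc_one_two (Ioo_subset_Icc_self ht)] using
      (hg (tent t)).hasDerivAt.comp t (hasDerivAt_tent_of_mem_Ioo_one_two ht)
  have flat : ∀ t < 0, HasDerivAt (F 1) 0 t := fun t ht => by
    simpa [hF1] using (hg (tent t)).hasDerivAt.comp t (hasDerivAt_tent_of_neg ht)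
  constructor
  · rw [hF.deriv_deriv_two hc (rise _ ⟨by norm_num, by norm_num⟩) (flat _ (by norm_num)), sub_zero]
  · rw [hF.deriv_deriv_two hc (fall _ ⟨by norm_num, by norm_num⟩)
      (rise _ ⟨by norm_num, by norm_num⟩)]
    norm_num
    ring

end SplineRecursion

lemma abs_deriv_deriv_sub_le_of_eq_comp_tent {μ : ℝ} (hμ0 : 0 < μ) (hμ1 : μ ≤ 1)
    {F G : ℕ → ℝ → ℝ} (hF : SplineRecursion F) (hG : SplineRecursion G)
    (hF1 : F 1 = trigArc μ ∘ tent) (hG1 : G 1 = id ∘ tent) {p : ℕ} (hp : 2 ≤ p) {k : ℕ}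
    (hk : k ≤ p / 2) :
    |deriv (deriv (F p)) (((p : ℝ) + 1) / 2 - k) - deriv (deriv (G p)) (((p : ℝ) + 1) / 2 - k)| ≤
      4 * (2 * p) ^ p * μ ^ 2 := by
  rcases hp.eq_or_lt with rfl | hp
  · have hslope : |deriv (trigArc μ) (1 / 2) - 1| ≤ μ ^ 2 := by
      rw [(hasDerivAt_trigArc μ _).deriv]
      exact abs_sq_div_two_mul_one_sub_cos_mul_cos_sub_one_le hμ0 hμ1 ⟨by norm_num, by norm_num⟩
    obtain ⟨hFhalf, hFthree⟩ := hF.deriv_deriv_two_of_eq_comp_tent (differentiable_trigArc μ) hF1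
    obtain ⟨hGhalf, hGthree⟩ := hG.deriv_deriv_two_of_eq_comp_tent differentiable_id hG1
    rw [deriv_id] at hGhalf hGthree
    obtain ⟨hslope_ge, hslope_le⟩ := abs_le.1 hslope
    have hμ2 : 0 ≤ μ ^ 2 := sq_nonneg μ
    interval_cases k <;> norm_num [hFhalf, hFthree, hGhalf, hGthree, abs_le] <;>
      constructor <;> linarith
  obtain ⟨q, rfl⟩ : ∃ q, p = q + 2 := ⟨p - 2, by omega⟩
  have hM : (1 : ℝ) ≤ ((q + 2 : ℕ) : ℝ) := by exact_mod_cast (by omega : 1 ≤ q + 2)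
  have hvanish : ∀ t ≤ 0, F 1 t = G 1 t := fun t ht => by
    simp [hF1, hG1, tent_of_nonpos ht, trigArc_zero]
  have hbase : ∀ t, |F 1 t - G 1 t| ≤ μ ^ 2 := fun t => by
    simpa [hF1, hG1] using abs_trigArc_sub_le hμ0 hμ1 (tent_mem_Icc t)
  have hcont : Continuous (F 1) := hF1 ▸ (differentiable_trigArc μ).continuous.comp continuous_tent
  refine (hF.abs_deriv_deriv_sub_le hG hcont (hG1 ▸ continuous_tent) hvanish hbase hM
    (by omega) (by linarith [(k.cast_nonneg : (0 : ℝ) ≤ k)])).trans ?_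
  rw [← mul_assoc]
  gcongr
  · linarith
  · omega

lemma abs_fSym_sub_le {φ ψ : ℕ → ℝ → ℝ} {p : ℕ} {B : ℝ}
    (h : ∀ k ≤ p / 2, |deriv (deriv (φ p)) (((p : ℝ) + 1) / 2 - k) -
      deriv (deriv (ψ p)) (((p : ℝ) + 1) / 2 - k)| ≤ B) (θ : ℝ) :
    |fSym φ p θ - fSym ψ p θ| ≤ (1 + p) * B := by
  set Δ : ℕ → ℝ := fun k =>
    deriv (deriv (φ p)) (((p : ℝ) + 1) / 2 - k) - deriv (deriv (ψ p)) (((p : ℝ) + 1) / 2 - k)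
  have hB : 0 ≤ B := (abs_nonneg _).trans (h 0 (Nat.zero_le _))
  have hsum : |∑ k ∈ Finset.Icc 1 (p / 2), Δ k * cos (k * θ)| ≤ (p / 2 : ℕ) * B := by
    calc _ ≤ ∑ k ∈ Finset.Icc 1 (p / 2), |Δ k * cos (k * θ)| := Finset.abs_sum_le_sum_abs _ _
      _ ≤ ∑ k ∈ Finset.Icc 1 (p / 2), B := Finset.sum_le_sum fun k hk => by
          rw [abs_mul]
          exact (mul_le_of_le_one_right (abs_nonneg _) (abs_cos_le_one _)).trans
            (h k (Finset.mem_Icc.1 hk).2)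
      _ = (p / 2 : ℕ) * B := by simp
  have hhalf : 2 * ((p / 2 : ℕ) : ℝ) ≤ p := by exact_mod_cast Nat.mul_div_le p 2
  have hsplit : fSym φ p θ - fSym ψ p θ =
      -Δ 0 - 2 * ∑ k ∈ Finset.Icc 1 (p / 2), Δ k * cos (k * θ) := by
    simp only [fSym, Δ, sub_mul, Finset.sum_sub_distrib, Nat.cast_zero, sub_zero]
    ring
  rw [hsplit]
  calc |-Δ 0 - 2 * ∑ k ∈ Finset.Icc 1 (p / 2), Δ k * cos (k * θ)|
      ≤ |Δ 0| + 2 * |∑ k ∈ Finset.Icc 1 (p / 2), Δ k * cos (k * θ)| := by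
        refine (abs_sub _ _).trans ?_
        rw [abs_neg, abs_mul, abs_two]
    _ ≤ B + 2 * ((p / 2 : ℕ) * B) := by
        gcongr
        simpa [Δ] using h 0 (Nat.zero_le _)
    _ ≤ (1 + p) * B := by nlinarith

lemma integral_abs_fSym_sub_le {φ ψ : ℕ → ℝ → ℝ} {p : ℕ} {B : ℝ}
    (h : ∀ k ≤ p / 2, |deriv (deriv (φ p)) (((p : ℝ) + 1) / 2 - k) -
      deriv (deriv (ψ p)) (((p : ℝ) + 1) / 2 - k)| ≤ B) :
    ∫ θ in (-π)..π, |fSym φ p θ - fSym ψ p θ| ≤ 2 * π * ((1 + p) * B) := by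
  have hint := intervalIntegral.norm_integral_le_of_norm_le_const (a := -π) (b := π)
    (f := fun θ => |fSym φ p θ - fSym ψ p θ|) fun θ _ => by
      rw [Real.norm_eq_abs, abs_abs]
      exact abs_fSym_sub_le h θ
  rw [Real.norm_eq_abs, sub_neg_eq_add, abs_of_pos (by linarith [pi_pos] : (0 : ℝ) < π + π)] at hint
  linarith [le_abs_self (∫ θ in (-π)..π, |fSym φ p θ - fSym ψ p θ|)]

theorem fSym_trig_L1_convergence (α : ℝ) (hα : 0 < α) (p : ℕ) (hp : 2 ≤ p)
    (Φ : ℝ → ℕ → ℝ → ℝ)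
    (hΦ1 : ∀ μ : ℝ, 0 < μ → μ < Real.pi → ∀ t : ℝ, Φ μ 1 t =
      if 0 ≤ t ∧ t < 1 then μ / (2 * (1 - Real.cos μ)) * Real.sin (μ * t)
      else if 1 ≤ t ∧ t < 2 then μ / (2 * (1 - Real.cos μ)) * Real.sin (μ * (2 - t))
      else 0)
    (hΦrec : ∀ μ : ℝ, 0 < μ → μ < Real.pi → ∀ q : ℕ, 2 ≤ q → ∀ t : ℝ,
      Φ μ q t = ∫ s in (0:ℝ)..t, (Φ μ (q - 1) s - Φ μ (q - 1) (s - 1)))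
    (ψ : ℕ → ℝ → ℝ)
    (hψ1 : ∀ t : ℝ, ψ 1 t =
      if 0 ≤ t ∧ t < 1 then t
      else if 1 ≤ t ∧ t < 2 then 2 - t
      else 0)
    (hψrec : ∀ q : ℕ, 2 ≤ q → ∀ t : ℝ,
      ψ q t = ∫ s in (0:ℝ)..t, (ψ (q - 1) s - ψ (q - 1) (s - 1))) :
    ∃ C : ℝ, 0 < C ∧ ∃ N : ℕ, 1 ≤ N ∧ (∀ n : ℕ, N ≤ n → α / (n : ℝ) < Real.pi) ∧
      ∀ n : ℕ, N ≤ n →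
        (∫ θ in (-Real.pi)..Real.pi, |fSym (Φ (α / n)) p θ - fSym ψ p θ|) ≤ C / (n : ℝ) ^ 2 := by
  have hsmall : ∀ n : ℕ, ⌈α⌉₊ + 1 ≤ n → 0 < (n : ℝ) ∧ α / n ≤ 1 := fun n hn => by
    have hαn : α + 1 ≤ n :=
      calc α + 1 ≤ ⌈α⌉₊ + 1 := by gcongr; exact Nat.le_ceil α
        _ ≤ n := by exact_mod_cast hn
    exact ⟨by linarith, (div_le_one (by linarith)).2 (by linarith)⟩
  refine ⟨2 * π * ((1 + p) * (4 * (2 * p) ^ p * α ^ 2)), by positivity, ⌈α⌉₊ + 1, by omega,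
    fun n hn => (hsmall n hn).2.trans_lt (by linarith [pi_gt_three]), fun n hn => ?_⟩
  obtain ⟨hn, hμ1⟩ := hsmall n hn
  have hμ0 : 0 < α / n := div_pos hα hn
  have hμπ : α / n < π := hμ1.trans_lt (by linarith [pi_gt_three])
  have hF1 : Φ (α / n) 1 = trigArc (α / n) ∘ tent :=
    funext fun t => (hΦ1 _ hμ0 hμπ t).trans (ite_eq_comp_tent (trigArc_zero _) t)
  have hG1 : ψ 1 = id ∘ tent := funext fun t => (hψ1 t).trans (ite_eq_comp_tent (g := id) rfl t)
  refine (integral_abs_fSym_sub_le fun k hk => abs_deriv_deriv_sub_le_of_eq_comp_tent hμ0 hμ1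
    (hΦrec _ hμ0 hμπ) hψrec hF1 hG1 hp hk).trans_eq ?_
  field_simp
end
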